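/- Let $P(t) = 1 + 5t + 5t^2 - 6t^3 + 4t^4 - t^5$ and let $H(t)$ be the formal power series $P(-t)/(1+t)^4 \in \mathbb{Q}[[t]]$ (i.e. $H(\mathcal{O}(\mathcal{C}(\mathrm{O}(3)));-t)$ where $H(\mathcal{O};t) = P(t)/(1-t)^4$). Then the coefficient of $t^9$ in the multiplicative inverse $1/H(t)$ is $-7330$; in particular this coefficient is negative. -/

import Mathlib

/-!
Modulo `t ^ 10`, the inverse of `H(t) = P(-t) / (1 + t) ^ 4` is the polynomial
`Q = 1 + 9t + 46t² + 183t³ + 628t⁴ + 1912t⁵ + 5129t⁶ + 11539t⁷ + 17883t⁸ - 7330t⁹`,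
as the polynomial identity `P(-t) · Q = (1 + t) ^ 4 + t ^ 10 · R` certifies; the coefficient of
`t ^ 9` is read off `Q`.
-/

open PowerSeries

namespace PowerSeries

variable {k : Type*} [Field k]

theorem coeff_inv_eq_of_mul_eq_one_add_X_pow {f q r : k⟦X⟧} {n m : ℕ}
    (h : f * q = 1 + X ^ n * r) (hm : m < n) : coeff m f⁻¹ = coeff m q := by
  have hf : constantCoeff f ≠ 0 := by
    intro hf0
    have := congrArg constantCoeff h
    simp [hf0, zero_pow (Nat.zero_lt_of_lt hm).ne'] at this
  have hdiff : f⁻¹ - q = X ^ n * -(f⁻¹ * r) := by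
    calc f⁻¹ - q = f⁻¹ * (1 - f * q) := by
          rw [mul_sub, ← mul_assoc, PowerSeries.inv_mul_cancel f hf]; ring
      _ = X ^ n * -(f⁻¹ * r) := by rw [h]; ring
  rw [← sub_eq_zero, ← map_sub]
  exact X_pow_dvd_iff.mp ⟨_, hdiff⟩ m hm

theorem coeff_inv_mul_inv_eq_of_mul_eq_add_X_pow {p d q r : k⟦X⟧} {n m : ℕ}
    (hd : constantCoeff d ≠ 0) (h : p * q = d + X ^ n * r) (hm : m < n) :
    coeff m (p * d⁻¹)⁻¹ = coeff m q :=
  coeff_inv_eq_of_mul_eq_one_add_X_pow (r := r * d⁻¹)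
    (by rw [mul_right_comm, h, add_mul, PowerSeries.mul_inv_cancel d hd, mul_assoc]) hm

end PowerSeries

theorem stmt13 :
    PowerSeries.coeff 9
        (((1 - 5 * X + 5 * X ^ 2 + 6 * X ^ 3 + 4 * X ^ 4 + X ^ 5 : ℚ⟦X⟧) *
            (((1 + X : ℚ⟦X⟧) ^ 4)⁻¹))⁻¹) = -7330 ∧
    PowerSeries.coeff 9
        (((1 - 5 * X + 5 * X ^ 2 + 6 * X ^ 3 + 4 * X ^ 4 + X ^ 5 : ℚ⟦X⟧) *
            (((1 + X : ℚ⟦X⟧) ^ 4)⁻¹))⁻¹) < 0 := by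
  have hcoeff : PowerSeries.coeff 9
      (((1 - 5 * X + 5 * X ^ 2 + 6 * X ^ 3 + 4 * X ^ 4 + X ^ 5 : ℚ⟦X⟧) *
        (((1 + X : ℚ⟦X⟧) ^ 4)⁻¹))⁻¹) = -7330 := by
    rw [coeff_inv_mul_inv_eq_of_mul_eq_add_X_pow
      (q := 1 + 9 * X + 46 * X ^ 2 + 183 * X ^ 3 + 628 * X ^ 4 + 1912 * X ^ 5 +
        5129 * X ^ 6 + 11539 * X ^ 7 + 17883 * X ^ 8 - 7330 * X ^ 9)
      (r := 217727 + 121933 * X + 39091 * X ^ 2 - 11437 * X ^ 3 - 7330 * X ^ 4)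
      (n := 10) (by simp) (by ring) (by norm_num)]
    simp [coeff_X_pow, ← map_ofNat C]
  exact ⟨hcoeff, by rw [hcoeff]; norm_num⟩
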